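/- Let A be a unital C*-algebra and a ∈ A. Then for every nonzero complex number α: v(a)³ ≤ (1/|α|)·( max{1,|α−1|}·‖a‖³ + min{ v(a*a²), v(a²a*) } ). -/

import Mathlib

/-!
A state `φ` makes `A` a pre-Hilbert space (the GNS space) with `⟪x, y⟫ = φ (x⋆ y)`, in which `1` is
a unit vector `e`. Since `‖α P_e - I‖ ≤ max 1 |α - 1|` for the rank-one projection `P_e`, one gets the
Buzano-type inequality `|α ⟪x, e⟫ ⟪e, y⟫ - ⟪x, y⟫| ≤ max 1 |α - 1| ‖x‖ ‖y‖`. With `x = a⋆a`, `y = a`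
and `|φ a|² ≤ φ (a⋆a)` this gives `|α| |φ a|³ ≤ max 1 |α - 1| ‖a‖³ + |φ (a⋆a²)|`; applied to `a⋆`
it gives the same bound with `φ (a²a⋆)`. Taking the supremum over states finishes the proof.
-/

open scoped ComplexOrder

/-- A state on a unital `C*`-algebra: a positive linear functional `φ` (equivalently, since the
algebra is complete, `φ (star b * b) ≥ 0` for all `b`) with `φ 1 = 1`. -/
def IsState {A : Type*} [CStarAlgebra A] (φ : A →ₗ[ℂ] ℂ) : Prop :=
  (∀ b : A, 0 ≤ φ (star b * b)) ∧ φ 1 = 1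

/-- The numerical radius of an element of a unital `C*`-algebra:
`v(a) = sup { |φ(a)| : φ a state on A }`. -/
noncomputable def numRadius {A : Type*} [CStarAlgebra A] (a : A) : ℝ :=
  sSup {r : ℝ | ∃ φ : A →ₗ[ℂ] ℂ, IsState φ ∧ r = ‖φ a‖}

open scoped InnerProductSpace

section Buzano

variable {𝕜 E : Type*} [RCLike 𝕜] [SeminormedAddCommGroup E] [InnerProductSpace 𝕜 E]

lemma norm_smul_inner_smul_sub_le {e : E} (he : ‖e‖ = 1) (α : 𝕜) (y : E) :
    ‖α • ⟪e, y⟫_𝕜 • e - y‖ ≤ max 1 ‖α - 1‖ * ‖y‖ := by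
  set p := ⟪e, y⟫_𝕜 • e
  set q := y - p
  have hee : ⟪e, e⟫_𝕜 = 1 := by simp [inner_self_eq_norm_sq_to_K, he]
  have hpq : ⟪p, q⟫_𝕜 = 0 := by
    simp only [p, q, inner_sub_right, inner_smul_left, inner_smul_right, hee]; ring
  have hy : ‖y‖ ^ 2 = ‖p‖ ^ 2 + ‖q‖ ^ 2 := by
    simpa only [sq, p, q, add_sub_cancel] using
      norm_add_sq_eq_norm_sq_add_norm_sq_of_inner_eq_zero p q hpq
  have hz : ‖α • p - y‖ ^ 2 = ‖α - 1‖ ^ 2 * ‖p‖ ^ 2 + ‖q‖ ^ 2 := by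
    have h := norm_add_sq_eq_norm_sq_add_norm_sq_of_inner_eq_zero ((α - 1) • p) (-q)
      (by rw [inner_smul_left, inner_neg_right, hpq]; simp)
    rw [show (α - 1) • p + -q = α • p - y by simp only [q, sub_smul, one_smul]; abel,
      norm_smul, norm_neg] at h
    rw [sq, h]; ring
  have h1 : ‖α - 1‖ ^ 2 ≤ max 1 ‖α - 1‖ ^ 2 :=
    pow_le_pow_left₀ (norm_nonneg _) (le_max_right _ _) 2
  have h2 : 1 ≤ max 1 ‖α - 1‖ ^ 2 := one_le_pow₀ (le_max_left _ _)
  rw [← pow_le_pow_iff_left₀ (norm_nonneg _) (by positivity) two_ne_zero, mul_pow, hz, hy]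
  nlinarith [mul_le_mul_of_nonneg_right h1 (sq_nonneg ‖p‖),
    mul_le_mul_of_nonneg_right h2 (sq_nonneg ‖q‖)]

lemma norm_mul_inner_mul_inner_sub_inner_le {e : E} (he : ‖e‖ = 1) (α : 𝕜) (x y : E) :
    ‖α * ⟪x, e⟫_𝕜 * ⟪e, y⟫_𝕜 - ⟪x, y⟫_𝕜‖ ≤ max 1 ‖α - 1‖ * (‖x‖ * ‖y‖) := by
  have : α * ⟪x, e⟫_𝕜 * ⟪e, y⟫_𝕜 - ⟪x, y⟫_𝕜 = ⟪x, α • ⟪e, y⟫_𝕜 • e - y⟫_𝕜 := by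
    rw [inner_sub_right, inner_smul_right, inner_smul_right]; ring
  rw [this, mul_left_comm]
  exact (norm_inner_le_norm _ _).trans
    (mul_le_mul_of_nonneg_left (norm_smul_inner_smul_sub_le he α y) (norm_nonneg x))

end Buzano

namespace IsState

variable {A : Type*} [CStarAlgebra A] {φ : A →ₗ[ℂ] ℂ}

-- `A` carries no order of its own; the spectral order gives access to positive functionals.
attribute [local instance] CStarAlgebra.spectralOrder CStarAlgebra.spectralOrderedRing

noncomputable def toPositiveLinearMap (hφ : IsState φ) : A →ₚ[ℂ] ℂ :=
  PositiveLinearMap.mk₀ φ fun x hx => by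
    obtain ⟨s, rfl⟩ := CStarAlgebra.nonneg_iff_eq_star_mul_self.mp hx
    exact hφ.1 s

lemma inner_toPreGNS (hφ : IsState φ) (x y : A) :
    ⟪hφ.toPositiveLinearMap.toPreGNS x, hφ.toPositiveLinearMap.toPreGNS y⟫_ℂ = φ (star x * y) :=
  rfl

lemma norm_toPreGNS_one (hφ : IsState φ) : ‖hφ.toPositiveLinearMap.toPreGNS 1‖ = 1 := by
  have h := norm_sq_eq_re_inner (𝕜 := ℂ) (hφ.toPositiveLinearMap.toPreGNS 1)
  rw [inner_toPreGNS, star_one, one_mul, hφ.2, RCLike.one_re] at h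
  exact (pow_eq_one_iff_of_nonneg (norm_nonneg _) two_ne_zero).mp h

lemma norm_toPreGNS_le (hφ : IsState φ) (x : A) : ‖hφ.toPositiveLinearMap.toPreGNS x‖ ≤ ‖x‖ := by
  set f := hφ.toPositiveLinearMap
  calc ‖f.toPreGNS x‖ = ‖f.leftMulMapPreGNS x (f.toPreGNS 1)‖ := by simp
    _ ≤ ‖f.leftMulMapPreGNS x‖ * ‖f.toPreGNS 1‖ := (f.leftMulMapPreGNS x).le_opNorm _
    _ ≤ ‖x‖ := by
      rw [hφ.norm_toPreGNS_one, mul_one]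
      exact LinearMap.mkContinuous_norm_le _ (norm_nonneg x) _

lemma map_star (hφ : IsState φ) (x : A) : φ (star x) = star (φ x) :=
  StarHomClass.map_star hφ.toPositiveLinearMap x

lemma norm_apply_le_norm_toPreGNS (hφ : IsState φ) (x : A) :
    ‖φ x‖ ≤ ‖hφ.toPositiveLinearMap.toPreGNS x‖ := by
  simpa [inner_toPreGNS, norm_toPreGNS_one] using
    norm_inner_le_norm (𝕜 := ℂ) (hφ.toPositiveLinearMap.toPreGNS 1)
      (hφ.toPositiveLinearMap.toPreGNS x)

lemma norm_mul_norm_apply_pow_three_le_star_mul_sq (hφ : IsState φ) (α : ℂ) (a : A) :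
    ‖α‖ * ‖φ a‖ ^ 3 ≤ max 1 ‖α - 1‖ * ‖a‖ ^ 3 + ‖φ (star a * a ^ 2)‖ := by
  set f := hφ.toPositiveLinearMap
  set e := f.toPreGNS 1
  set x := f.toPreGNS (star a * a)
  set y := f.toPreGNS a
  have hxe : ⟪x, e⟫_ℂ = ((‖y‖ ^ 2 : ℝ) : ℂ) := by
    rw [inner_toPreGNS, mul_one, star_mul, star_star, ← inner_toPreGNS hφ a a,
      inner_self_eq_norm_sq_to_K]
    norm_cast
  have hey : ⟪e, y⟫_ℂ = φ a := by rw [inner_toPreGNS, star_one, one_mul]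
  have hxy : ⟪x, y⟫_ℂ = φ (star a * a ^ 2) := by
    rw [inner_toPreGNS, star_mul, star_star, mul_assoc, sq]
  have hφa : ‖φ a‖ ≤ ‖y‖ := hφ.norm_apply_le_norm_toPreGNS a
  have hxy_le : ‖x‖ * ‖y‖ ≤ ‖a‖ ^ 3 := by
    calc ‖x‖ * ‖y‖ ≤ ‖star a * a‖ * ‖a‖ :=
          mul_le_mul (hφ.norm_toPreGNS_le _) (hφ.norm_toPreGNS_le a) (norm_nonneg _)
            (norm_nonneg _)
      _ = ‖a‖ ^ 3 := by rw [CStarRing.norm_star_mul_self]; ring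
  calc ‖α‖ * ‖φ a‖ ^ 3 ≤ ‖α‖ * (‖y‖ ^ 2 * ‖φ a‖) := by rw [pow_succ]; gcongr
    _ = ‖α * ⟪x, e⟫_ℂ * ⟪e, y⟫_ℂ‖ := by
      rw [hxe, hey, norm_mul, norm_mul, Complex.norm_real, Real.norm_of_nonneg (by positivity),
        mul_assoc]
    _ ≤ ‖α * ⟪x, e⟫_ℂ * ⟪e, y⟫_ℂ - ⟪x, y⟫_ℂ‖ + ‖⟪x, y⟫_ℂ‖ := norm_le_norm_sub_add _ _
    _ ≤ max 1 ‖α - 1‖ * (‖x‖ * ‖y‖) + ‖⟪x, y⟫_ℂ‖ := by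
      gcongr; exact norm_mul_inner_mul_inner_sub_inner_le hφ.norm_toPreGNS_one α x y
    _ ≤ max 1 ‖α - 1‖ * ‖a‖ ^ 3 + ‖φ (star a * a ^ 2)‖ := by
      rw [hxy]; gcongr

lemma norm_mul_norm_apply_pow_three_le_sq_mul_star (hφ : IsState φ) (α : ℂ) (a : A) :
    ‖α‖ * ‖φ a‖ ^ 3 ≤ max 1 ‖α - 1‖ * ‖a‖ ^ 3 + ‖φ (a ^ 2 * star a)‖ := by
  have h := hφ.norm_mul_norm_apply_pow_three_le_star_mul_sq (α := α) (star a)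
  rwa [star_star, show a * star a ^ 2 = star (a ^ 2 * star a) by simp [sq, mul_assoc],
    hφ.map_star, hφ.map_star, norm_star, norm_star, norm_star] at h

lemma norm_apply_le (hφ : IsState φ) (b : A) : ‖φ b‖ ≤ ‖b‖ :=
  (hφ.norm_apply_le_norm_toPreGNS b).trans (hφ.norm_toPreGNS_le b)

lemma norm_apply_le_numRadius (hφ : IsState φ) (b : A) : ‖φ b‖ ≤ numRadius b :=
  le_csSup ⟨‖b‖, by rintro _ ⟨ψ, hψ, rfl⟩; exact hψ.norm_apply_le b⟩ ⟨φ, hφ, rfl⟩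

end IsState

section numRadius

variable {A : Type*} [CStarAlgebra A]

lemma numRadius_nonneg (b : A) : 0 ≤ numRadius b :=
  Real.sSup_nonneg (by rintro _ ⟨_, _, rfl⟩; exact norm_nonneg _)

lemma numRadius_pow_le {a : A} {n : ℕ} {C : ℝ} (hn : n ≠ 0) (hC : 0 ≤ C)
    (h : ∀ φ : A →ₗ[ℂ] ℂ, IsState φ → ‖φ a‖ ^ n ≤ C) : numRadius a ^ n ≤ C := by
  have hr : numRadius a ≤ C ^ (n⁻¹ : ℝ) := by
    refine Real.sSup_le ?_ (by positivity)
    rintro _ ⟨φ, hφ, rfl⟩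
    exact le_of_pow_le_pow_left₀ hn (by positivity)
      ((h φ hφ).trans_eq (Real.rpow_inv_natCast_pow hC hn).symm)
  calc numRadius a ^ n ≤ (C ^ (n⁻¹ : ℝ)) ^ n := pow_le_pow_left₀ (numRadius_nonneg a) hr n
    _ = C := Real.rpow_inv_natCast_pow hC hn

end numRadius

/-- Theorem 2.16: for every nonzero `α ∈ ℂ`,
`v(a)³ ≤ (1/|α|)·(max{1,|α−1|}·‖a‖³ + min{v(a*a²), v(a²a*)})`. -/
theorem numRadius_cube_le_min
    {A : Type*} [CStarAlgebra A] (a : A) (α : ℂ) (hα : α ≠ 0) :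
    numRadius a ^ 3 ≤
      (1 / ‖α‖) *
        (max 1 ‖α - 1‖ * ‖a‖ ^ 3
          + min (numRadius (star a * a ^ 2)) (numRadius (a ^ 2 * star a))) := by
  have hα' : 0 < ‖α‖ := norm_pos_iff.mpr hα
  have hmin : 0 ≤ min (numRadius (star a * a ^ 2)) (numRadius (a ^ 2 * star a)) :=
    le_min (numRadius_nonneg _) (numRadius_nonneg _)
  refine numRadius_pow_le three_ne_zero (by positivity) fun φ hφ ↦ ?_
  rw [one_div, inv_mul_eq_div, le_div_iff₀ hα', mul_comm, ← min_add_add_left]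
  exact le_min
    ((hφ.norm_mul_norm_apply_pow_three_le_star_mul_sq α a).trans
      (by gcongr; exact hφ.norm_apply_le_numRadius _))
    ((hφ.norm_mul_norm_apply_pow_three_le_sq_mul_star α a).trans
      (by gcongr; exact hφ.norm_apply_le_numRadius _))
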